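/- For any real m×n matrix A of rank r and any integer k with 1 ≤ k < r, the rank-k truncated SVD A_k = Σ_{i=1}^k σ_i u_i v_iᵀ satisfies ‖A − A_k‖₂ = min{‖A − B‖₂ : rank(B) ≤ k} = σ_{k+1}, where σ_i are the singular values of A in decreasing order. -/

import Mathlib

open Matrix BigOperators

noncomputable def singularValue {m n : ℕ} (A : Matrix (Fin m) (Fin n) ℝ) : Fin n → ℝ :=
  fun j =>
    Real.sqrt ((show (Aᵀ * A).IsHermitian by
        simpa using Matrix.isHermitian_conjTranspose_mul_self A).eigenvalues
      (Tuple.sort (fun i => -(show (Aᵀ * A).IsHermitian by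
        simpa using Matrix.isHermitian_conjTranspose_mul_self A).eigenvalues i) j))

noncomputable def matSpectralNorm {m n : ℕ} (A : Matrix (Fin m) (Fin n) ℝ) : ℝ :=
  ‖LinearMap.toContinuousLinearMap (Matrix.toEuclideanLin A)‖

noncomputable def frobNorm {m n : ℕ} (A : Matrix (Fin m) (Fin n) ℝ) : ℝ :=
  Real.sqrt (∑ i, ∑ j, (A i j)^2)

noncomputable def pinv {a b : ℕ} (W : Matrix (Fin a) (Fin b) ℝ) : Matrix (Fin b) (Fin a) ℝ :=
  if a ≤ b then Wᵀ * (W * Wᵀ)⁻¹ else (Wᵀ * W)⁻¹ * Wᵀ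

/-! With `A = ∑ σᵢ uᵢ vᵢᵀ` and orthonormal families `uᵢ`, `vᵢ`, one has
`‖A x‖² = ∑ σᵢ² ⟪vᵢ, x⟫²`. The residual `A - A_k` keeps only the weights `σᵢ`, `i > k`, so
Bessel's inequality bounds its spectral norm by `σ_{k+1}`, and `v_{k+1}` attains it. If
`rank B ≤ k`, the kernel of `B` meets the `(k+1)`-dimensional span of `v_1, …, v_{k+1}` in some
`x ≠ 0`, and there `‖(A - B) x‖ = ‖A x‖ ≥ σ_{k+1} ‖x‖` (`σ_{k+1}` is `σ ⟨k, _⟩` in the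
0-indexed statement). -/

open scoped RealInnerProductSpace
open WithLp (toLp)

theorem LinearMap.exists_mem_ne_zero_map_eq_zero_of_finrank_range_lt {K V W : Type*} [Field K]
    [AddCommGroup V] [Module K V] [AddCommGroup W] [Module K W] [FiniteDimensional K V]
    (f : V →ₗ[K] W) {S : Submodule K V} (h : Module.finrank K (range f) < Module.finrank K S) :
    ∃ x ∈ S, x ≠ 0 ∧ f x = 0 := by
  by_contra! hinj
  have hS : Function.Injective (f.domRestrict S) := by
    rw [← LinearMap.ker_eq_bot, Submodule.eq_bot_iff]
    exact fun x hx => Subtype.ext (by_contra fun hne => hinj x x.2 hne hx)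
  have : Module.finrank K (range (f.domRestrict S)) ≤ Module.finrank K (range f) :=
    Submodule.finrank_mono (by rw [LinearMap.range_domRestrict]; exact LinearMap.map_le_range)
  rw [LinearMap.finrank_range_of_inj hS] at this
  omega

section Orthonormal

variable {ι E : Type*} [NormedAddCommGroup E] [InnerProductSpace ℝ E] {v : ι → E}

theorem Orthonormal.norm_sum_smul_sq [Fintype ι] (hv : Orthonormal ℝ v) (c : ι → ℝ) :
    ‖∑ i, c i • v i‖ ^ 2 = ∑ i, c i ^ 2 := by
  rw [← real_inner_self_eq_norm_sq, hv.inner_sum]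
  simp [sq]

theorem Orthonormal.sum_sq_inner_of_mem_span (hv : Orthonormal ℝ v) {s : Finset ι} {x : E}
    (hx : x ∈ Submodule.span ℝ (v '' s)) : ∑ i ∈ s, ⟪v i, x⟫ ^ 2 = ‖x‖ ^ 2 := by
  classical
  rw [← Finset.coe_image] at hx
  simpa [← Finset.sum_attach s] using (OrthonormalBasis.span hv s).sum_sq_inner_right ⟨x, hx⟩

theorem Orthonormal.finrank_span_image_finset (hv : Orthonormal ℝ v) (s : Finset ι) :
    Module.finrank ℝ (Submodule.span ℝ (v '' s)) = s.card := by
  classical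
  rw [← Finset.coe_image, Module.finrank_eq_card_basis (OrthonormalBasis.span hv s).toBasis]
  simp

end Orthonormal

theorem orthonormal_toLp_iff {κ ι : Type*} [Fintype κ] [DecidableEq ι] {u : ι → κ → ℝ} :
    Orthonormal ℝ (fun i => toLp 2 (u i) : ι → EuclideanSpace ℝ κ) ↔
      ∀ i j, ∑ t, u i t * u j t = if i = j then 1 else 0 := by
  rw [orthonormal_iff_ite]
  simp [PiLp.inner_apply, mul_comm]

section MatSpectralNorm

variable {m n : ℕ} (M : Matrix (Fin m) (Fin n) ℝ)

theorem norm_toEuclideanLin_apply_le (x : EuclideanSpace ℝ (Fin n)) :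
    ‖toEuclideanLin M x‖ ≤ matSpectralNorm M * ‖x‖ :=
  (LinearMap.toContinuousLinearMap (toEuclideanLin M)).le_opNorm x

theorem matSpectralNorm_le_of_forall {C : ℝ} (hC : 0 ≤ C)
    (h : ∀ x, ‖toEuclideanLin M x‖ ≤ C * ‖x‖) : matSpectralNorm M ≤ C :=
  ContinuousLinearMap.opNorm_le_bound _ hC h

theorem le_matSpectralNorm_of_ne_zero {C : ℝ} {x : EuclideanSpace ℝ (Fin n)} (hx : x ≠ 0)
    (h : C * ‖x‖ ≤ ‖toEuclideanLin M x‖) : C ≤ matSpectralNorm M :=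
  le_of_mul_le_mul_right (h.trans (norm_toEuclideanLin_apply_le M x)) (norm_pos_iff.mpr hx)

end MatSpectralNorm

theorem Matrix.rank_eq_finrank_range_toEuclideanLin {m n : Type*} [Fintype m] [Fintype n]
    [DecidableEq n] (B : Matrix m n ℝ) :
    B.rank = Module.finrank ℝ (LinearMap.range (toEuclideanLin B)) :=
  B.rank_eq_finrank_range_toLin (PiLp.basisFun 2 ℝ m) (PiLp.basisFun 2 ℝ n)

section SumSmulVecMulVec

variable {m n ι : Type*} [Fintype n] [DecidableEq n] [Fintype ι] {u : ι → m → ℝ} {v : ι → n → ℝ}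

theorem toEuclideanLin_sum_smul_vecMulVec_apply (w : ι → ℝ) (x : EuclideanSpace ℝ n) :
    toEuclideanLin (∑ i, w i • vecMulVec (u i) (v i)) x =
      ∑ i, (w i * ⟪toLp 2 (v i), x⟫) • toLp 2 (u i) := by
  ext s
  simp only [map_sum, map_smul, LinearMap.coe_sum, LinearMap.coe_smul, Finset.sum_apply,
    Pi.smul_apply, WithLp.ofLp_sum, WithLp.ofLp_smul, ofLp_toLpLin, toLin'_apply, mulVec,
    dotProduct, vecMulVec_apply, smul_eq_mul, Finset.mul_sum, Finset.sum_mul, PiLp.inner_apply,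
    RCLike.inner_apply, Real.ringHom_apply]
  exact Finset.sum_congr rfl fun i _ => Finset.sum_congr rfl fun t _ => by ring

variable [Fintype m]

theorem norm_toEuclideanLin_sum_smul_vecMulVec_sq
    (hu : Orthonormal ℝ (fun i => toLp 2 (u i) : ι → EuclideanSpace ℝ m)) (w : ι → ℝ)
    (x : EuclideanSpace ℝ n) :
    ‖toEuclideanLin (∑ i, w i • vecMulVec (u i) (v i)) x‖ ^ 2 =
      ∑ i, (w i * ⟪toLp 2 (v i), x⟫) ^ 2 := by
  rw [toEuclideanLin_sum_smul_vecMulVec_apply, hu.norm_sum_smul_sq]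

theorem norm_toEuclideanLin_sum_smul_vecMulVec_le
    (hu : Orthonormal ℝ (fun i => toLp 2 (u i) : ι → EuclideanSpace ℝ m))
    (hv : Orthonormal ℝ (fun i => toLp 2 (v i) : ι → EuclideanSpace ℝ n)) {w : ι → ℝ} {C : ℝ}
    (hC : 0 ≤ C) (hw : ∀ i, |w i| ≤ C) (x : EuclideanSpace ℝ n) :
    ‖toEuclideanLin (∑ i, w i • vecMulVec (u i) (v i)) x‖ ≤ C * ‖x‖ := by
  have hbessel := hv.sum_inner_products_le (s := Finset.univ) x
  simp only [Real.norm_eq_abs, sq_abs] at hbessel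
  refine (pow_le_pow_iff_left₀ (norm_nonneg _) (by positivity) two_ne_zero).mp ?_
  calc ‖toEuclideanLin (∑ i, w i • vecMulVec (u i) (v i)) x‖ ^ 2
      = ∑ i, w i ^ 2 * ⟪toLp 2 (v i), x⟫ ^ 2 := by
        simp only [norm_toEuclideanLin_sum_smul_vecMulVec_sq hu, mul_pow]
    _ ≤ ∑ i, C ^ 2 * ⟪toLp 2 (v i), x⟫ ^ 2 := by
        refine Finset.sum_le_sum fun i _ => mul_le_mul_of_nonneg_right ?_ (sq_nonneg _)
        exact sq_le_sq.mpr ((hw i).trans (le_abs_self C))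
    _ ≤ (C * ‖x‖) ^ 2 := by
        rw [← Finset.mul_sum, mul_pow]
        gcongr

theorem mul_norm_le_norm_toEuclideanLin_sum_smul_vecMulVec
    (hu : Orthonormal ℝ (fun i => toLp 2 (u i) : ι → EuclideanSpace ℝ m))
    (hv : Orthonormal ℝ (fun i => toLp 2 (v i) : ι → EuclideanSpace ℝ n)) {w : ι → ℝ}
    {s : Finset ι} {c : ℝ} (hc : 0 ≤ c) (hw : ∀ i ∈ s, c ≤ |w i|) {x : EuclideanSpace ℝ n}
    (hx : x ∈ Submodule.span ℝ ((fun i => toLp 2 (v i)) '' s)) :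
    c * ‖x‖ ≤ ‖toEuclideanLin (∑ i, w i • vecMulVec (u i) (v i)) x‖ := by
  refine (pow_le_pow_iff_left₀ (by positivity) (norm_nonneg _) two_ne_zero).mp ?_
  calc (c * ‖x‖) ^ 2 = ∑ i ∈ s, c ^ 2 * ⟪toLp 2 (v i), x⟫ ^ 2 := by
        rw [← Finset.mul_sum, hv.sum_sq_inner_of_mem_span hx, mul_pow]
    _ ≤ ∑ i ∈ s, w i ^ 2 * ⟪toLp 2 (v i), x⟫ ^ 2 := by
        refine Finset.sum_le_sum fun i hi => mul_le_mul_of_nonneg_right ?_ (sq_nonneg _)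
        exact sq_le_sq.mpr ((abs_of_nonneg hc).trans_le (hw i hi))
    _ ≤ ∑ i, w i ^ 2 * ⟪toLp 2 (v i), x⟫ ^ 2 :=
        Finset.sum_le_univ_sum_of_nonneg fun i => by positivity
    _ = ‖toEuclideanLin (∑ i, w i • vecMulVec (u i) (v i)) x‖ ^ 2 := by
        simp only [norm_toEuclideanLin_sum_smul_vecMulVec_sq hu, mul_pow]

end SumSmulVecMulVec

theorem matSpectralNorm_sum_smul_vecMulVec {ι : Type*} [Fintype ι] {m n : ℕ}
    {u : ι → Fin m → ℝ} {v : ι → Fin n → ℝ}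
    (hu : Orthonormal ℝ (fun i => toLp 2 (u i) : ι → EuclideanSpace ℝ (Fin m)))
    (hv : Orthonormal ℝ (fun i => toLp 2 (v i) : ι → EuclideanSpace ℝ (Fin n)))
    {w : ι → ℝ} {c : ℝ} {j : ι} (hw : ∀ i, |w i| ≤ c) (hj : w j = c) :
    matSpectralNorm (∑ i, w i • vecMulVec (u i) (v i)) = c := by
  have hc : 0 ≤ c := (abs_nonneg _).trans (hw j)
  refine le_antisymm (matSpectralNorm_le_of_forall _ hc
    (norm_toEuclideanLin_sum_smul_vecMulVec_le hu hv hc hw)) ?_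
  refine le_matSpectralNorm_of_ne_zero _ (hv.ne_zero j) ?_
  simpa [hv.norm_eq_one] using mul_norm_le_norm_toEuclideanLin_sum_smul_vecMulVec hu hv
    (w := w) (s := {j}) hc (by simp [hj, abs_of_nonneg hc]) (x := toLp 2 (v j))
    (Submodule.subset_span (by simp))

theorem le_matSpectralNorm_sum_smul_vecMulVec_sub {m n r : ℕ}
    {u : Fin r → Fin m → ℝ} {v : Fin r → Fin n → ℝ}
    (hu : Orthonormal ℝ (fun i => toLp 2 (u i) : Fin r → EuclideanSpace ℝ (Fin m)))
    (hv : Orthonormal ℝ (fun i => toLp 2 (v i) : Fin r → EuclideanSpace ℝ (Fin n)))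
    {σ : Fin r → ℝ} (hσ : Antitone σ) {j : Fin r} (hσj : 0 ≤ σ j)
    {B : Matrix (Fin m) (Fin n) ℝ} (hB : B.rank ≤ j) :
    σ j ≤ matSpectralNorm (∑ i, σ i • vecMulVec (u i) (v i) - B) := by
  have hdim : Module.finrank ℝ (LinearMap.range (toEuclideanLin B)) <
      Module.finrank ℝ (Submodule.span ℝ ((fun i => toLp 2 (v i)) '' (Finset.Iic j))) := by
    rw [hv.finrank_span_image_finset, Fin.card_Iic, ← B.rank_eq_finrank_range_toEuclideanLin]
    omega
  obtain ⟨x, hxS, hx0, hBx⟩ :=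
    (toEuclideanLin B).exists_mem_ne_zero_map_eq_zero_of_finrank_range_lt hdim
  refine le_matSpectralNorm_of_ne_zero _ hx0 ?_
  rw [map_sub, LinearMap.sub_apply, hBx, sub_zero]
  exact mul_norm_le_norm_toEuclideanLin_sum_smul_vecMulVec hu hv hσj
    (fun i hi => (hσ (Finset.mem_Iic.mp hi)).trans (le_abs_self _)) hxS

theorem truncated_svd_spectral_opt_general {m n r : ℕ} (A : Matrix (Fin m) (Fin n) ℝ)
    (u : Fin r → Fin m → ℝ) (v : Fin r → Fin n → ℝ) (σ : Fin r → ℝ)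
    (hu : ∀ i j : Fin r, (∑ t, u i t * u j t) = if i = j then 1 else 0)
    (hv : ∀ i j : Fin r, (∑ t, v i t * v j t) = if i = j then 1 else 0)
    (hσpos : ∀ i, 0 < σ i) (hσmono : ∀ i j : Fin r, i ≤ j → σ j ≤ σ i)
    (hsvd : A = ∑ i, σ i • Matrix.vecMulVec (u i) (v i))
    (k : ℕ) (hkr : k < r) :
    matSpectralNorm (A - ∑ i : Fin r, if (i : ℕ) < k then σ i • Matrix.vecMulVec (u i) (v i) else 0)
      = σ ⟨k, hkr⟩ ∧
    ∀ B : Matrix (Fin m) (Fin n) ℝ, B.rank ≤ k →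
      σ ⟨k, hkr⟩ ≤ matSpectralNorm (A - B) := by
  rw [← orthonormal_toLp_iff] at hu hv
  refine ⟨?_, fun B hB => hsvd ▸
    le_matSpectralNorm_sum_smul_vecMulVec_sub hu hv hσmono (hσpos _).le hB⟩
  have hresidual : A - (∑ i : Fin r, if (i : ℕ) < k then σ i • vecMulVec (u i) (v i) else 0) =
      ∑ i : Fin r, (if (i : ℕ) < k then 0 else σ i) • vecMulVec (u i) (v i) := by
    rw [hsvd, ← Finset.sum_sub_distrib]
    refine Finset.sum_congr rfl fun i _ => ?_
    split_ifs <;> simp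
  have hweights : ∀ i : Fin r, |if (i : ℕ) < k then 0 else σ i| ≤ σ ⟨k, hkr⟩ := by
    intro i
    split_ifs with hik
    · simpa using (hσpos _).le
    · rw [abs_of_pos (hσpos i)]
      exact hσmono _ _ (Fin.le_def.mpr (not_lt.mp hik))
  rw [hresidual]
  exact matSpectralNorm_sum_smul_vecMulVec hu hv hweights (j := ⟨k, hkr⟩) (if_neg k.lt_irrefl)

/-- Eckart–Young: the rank-k truncated SVD is the best rank-k approximation in
the spectral norm, with error σ_{k+1}. -/
theorem truncated_svd_spectral_opt {m n r : ℕ} (A : Matrix (Fin m) (Fin n) ℝ)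
    (u : Fin r → Fin m → ℝ) (v : Fin r → Fin n → ℝ) (σ : Fin r → ℝ)
    (hA : A.rank = r)
    (hu : ∀ i j : Fin r, (∑ t, u i t * u j t) = if i = j then 1 else 0)
    (hv : ∀ i j : Fin r, (∑ t, v i t * v j t) = if i = j then 1 else 0)
    (hσpos : ∀ i, 0 < σ i) (hσmono : ∀ i j : Fin r, i ≤ j → σ j ≤ σ i)
    (hsvd : A = ∑ i, σ i • Matrix.vecMulVec (u i) (v i))
    (k : ℕ) (hk1 : 1 ≤ k) (hkr : k < r) :
    matSpectralNorm (A - ∑ i : Fin r, if (i : ℕ) < k then σ i • Matrix.vecMulVec (u i) (v i) else 0)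
      = σ ⟨k, hkr⟩ ∧
    ∀ B : Matrix (Fin m) (Fin n) ℝ, B.rank ≤ k →
      σ ⟨k, hkr⟩ ≤ matSpectralNorm (A - B) :=
  truncated_svd_spectral_opt_general A u v σ hu hv hσpos hσmono hsvd k hkr
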